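/- (Erdős cardinal implies free subsets) Let λ be an infinite cardinal and κ a cardinal satisfying the partition relation κ → (ω)_λ^{<ω}. Then every algebra with underlying set of cardinality κ and signature of size at most λ has an infinite free subset; in particular no such algebra is Artinian. -/

import Mathlib

universe u

structure Alg (ι : Type u) (M : Type u) where
  arity : ι → ℕ
  op : (i : ι) → (Fin (arity i) → M) → M

namespace Alg

variable {ι M : Type u}

/-- A set is closed under all operations of the algebra. -/
def Closed (A : Alg ι M) (S : Set M) : Prop :=
  ∀ (i : ι) (x : Fin (A.arity i) → M), (∀ k, x k ∈ S) → A.op i x ∈ S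

/-- Membership in the subalgebra generated by `X`. -/
inductive cl (A : Alg ι M) (X : Set M) : M → Prop
  | base {m : M} (h : m ∈ X) : cl A X m
  | op (i : ι) (x : Fin (A.arity i) → M) (h : ∀ k, cl A X (x k)) : cl A X (A.op i x)

/-- A subset is free if no element lies in the subalgebra generated by the others. -/
def Free (A : Alg ι M) (X : Set M) : Prop :=
  ∀ x ∈ X, ¬ A.cl (X \ {x}) x

/-- An algebra is Artinian if there is no infinite strictly descending chain of
(nonempty closed) subalgebras. -/
def Artinian (A : Alg ι M) : Prop :=
  ¬ ∃ S : ℕ → Set M, (∀ n, (S n).Nonempty ∧ A.Closed (S n)) ∧ ∀ n, S (n + 1) ⊂ S n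

end Alg

open Cardinal

/-!
Color a finite set `s₀ < ⋯ < s_{n-1}` of the algebra by some pair `(p, t)` such that the term `t`
computes `s_p` from the other `s_j`, or by `none` if there is no such pair; there are at most `λ`
colors. Suppose the homogeneous sequence `a` had an element generated by the others. Then every
`n`-subset of `range a`, for a suitable `n`, gets the same color `(p, t)`. Comparing the sets
`{a₀, a₂, …, a_{2(n-1)}}` and the same set with `a_{2p}` replaced by `a_{2p+1}`, on which `t`
takes the same value, gives `a_{2p} = a_{2p+1}`. An infinite free set `{x₀, x₁, …}` then yields
the strictly descending chain of subalgebras generated by the tails `{x_n, x_{n+1}, …}`.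
-/

namespace FirstOrder.Language.Term

variable {L : Language} {M α : Type*} [L.Structure M] [DecidableEq α]

theorem realize_congr {t : L.Term α} {v w : α → M} (h : ∀ a ∈ t.varFinset, v a = w a) :
    t.realize v = t.realize w := by
  induction t with
  | var a => exact h a (by simp [varFinset])
  | func f ts ih =>
    exact congrArg (Structure.funMap f) <| funext fun i =>
      ih i fun a ha => h a (Finset.mem_biUnion.mpr ⟨i, Finset.mem_univ i, ha⟩)

end FirstOrder.Language.Term

theorem StrictMono.sort_image {α β : Type*} [LinearOrder α] [LinearOrder β] {f : α → β}
    (hf : StrictMono f) (s : Finset α) : (s.image f).sort = s.sort.map f := by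
  have := (hf.strictMonoOn s).map_finsetSort (f := ⟨f, hf.injective⟩)
  rw [Finset.map_eq_image] at this
  exact this.symm

namespace Alg

open FirstOrder.Language

variable {ι M : Type u} (A : Alg ι M)

def language : FirstOrder.Language.{u, 0} where
  Functions n := {i : ι // A.arity i = n}
  Relations _ := Empty

instance : A.language.Structure M where
  funMap f x := A.op f.1 (x ∘ Fin.cast f.2)
  RelMap r := Empty.elim r

theorem mk_term_le {lam : Cardinal.{u}} (hlam : ℵ₀ ≤ lam) (hι : #ι ≤ lam) :
    #(A.language.Term ℕ) ≤ lam := by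
  have hsig : #(Σ n, A.language.Functions n) = #ι :=
    Cardinal.mk_congr (Equiv.sigmaFiberEquiv A.arity)
  refine Term.card_le.trans (max_le hlam ?_)
  rw [Cardinal.mk_sum, hsig]
  simpa using Cardinal.add_le_of_le hlam hlam hι

theorem exists_term_of_cl_image {α : Type*} [DecidableEq α] {x : α → M} {S : Set α} {m : M}
    (h : A.cl (x '' S) m) : ∃ t : A.language.Term α, ↑t.varFinset ⊆ S ∧ t.realize x = m := by
  induction h with
  | base hm =>
    obtain ⟨a, ha, rfl⟩ := hm
    exact ⟨Term.var a, by simpa [Term.varFinset], rfl⟩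
  | op i y _ ih =>
    choose ts hts hreal using ih
    refine ⟨Term.func ⟨i, rfl⟩ ts, ?_, ?_⟩
    · simpa [Term.varFinset] using hts
    · exact congrArg (A.op i) (funext hreal)

theorem cl_mono {X Y : Set M} (h : X ⊆ Y) {m : M} (hm : A.cl X m) : A.cl Y m := by
  induction hm with
  | base hm => exact cl.base (h hm)
  | op i x _ ih => exact cl.op i x ih

theorem closed_cl (X : Set M) : A.Closed {m | A.cl X m} :=
  fun i x hx => cl.op i x hx

/-- `t` computes the entry of `l` at position `p` from the other entries, whatever the values of
the variables beyond `l.length`; the equation also forces `p < l.length`. -/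
def IsWitness (l : List M) (p : ℕ) (t : A.language.Term ℕ) : Prop :=
  ∀ v : ℕ → M, (∀ j ≠ p, ∀ m ∈ l[j]?, v j = m) → l[p]? = some (t.realize v)

abbrev Color : Type u := Option (ℕ × A.language.Term ℕ)

open Classical in
noncomputable def witnessColor (l : List M) : A.Color :=
  if h : ∃ w : ℕ × A.language.Term ℕ, A.IsWitness l w.1 w.2 then some h.choose else none

theorem mk_color_le {lam : Cardinal.{u}} (hlam : ℵ₀ ≤ lam) (hι : #ι ≤ lam) : #A.Color ≤ lam := by
  rw [Cardinal.mk_option, Cardinal.mk_prod]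
  simp only [Cardinal.mk_nat, Cardinal.lift_aleph0, Cardinal.lift_uzero]
  exact Cardinal.add_le_of_le hlam (Cardinal.mul_le_of_le hlam hlam (A.mk_term_le hlam hι))
    (Cardinal.one_le_aleph0.trans hlam)

variable {A}

theorem isWitness_of_witnessColor_eq_some {l : List M} {w : ℕ × A.language.Term ℕ}
    (h : A.witnessColor l = some w) : A.IsWitness l w.1 w.2 := by
  unfold witnessColor at h
  split_ifs at h with hex
  exact Option.some_injective _ h ▸ hex.choose_spec

theorem witnessColor_ne_none {l : List M} {p : ℕ} {t : A.language.Term ℕ}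
    (h : A.IsWitness l p t) : A.witnessColor l ≠ none := by
  unfold witnessColor
  rw [dif_pos ⟨(p, t), h⟩]
  exact Option.some_ne_none _

theorem isWitness_sort_map {x : ℕ → M} {F : Finset ℕ} {J : ℕ} (hJ : J ∈ F)
    {t : A.language.Term ℕ} (ht : t.varFinset ⊆ F.erase J) (hreal : t.realize x = x J) :
    A.IsWitness (F.sort.map x) (F.sort.idxOf J) (t.relabel (F.sort.idxOf ·)) := by
  intro v hv
  have hmem : ∀ k ∈ F, k ∈ F.sort := fun k hk => (Finset.mem_sort _).2 hk
  have hentry : ∀ k ∈ F, (F.sort.map x)[F.sort.idxOf k]? = some (x k) := fun k hk => by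
    rw [List.getElem?_map, List.getElem?_idxOf (hmem k hk), Option.map_some]
  rw [hentry J hJ, Term.realize_relabel, ← hreal]
  refine congrArg some (Term.realize_congr fun k hk => ?_)
  obtain ⟨hkJ, hkF⟩ := Finset.mem_erase.1 (ht hk)
  exact (hv _ (by rwa [Ne, List.idxOf_inj (hmem k hkF)]) _ (hentry k hkF)).symm

theorem IsWitness.apply_eq {x : ℕ → M} (hx : Function.Injective x) {f g : ℕ → ℕ} {n q : ℕ}
    {t : A.language.Term ℕ} (hfg : ∀ j ≠ q, f j = g j)
    (hf : A.IsWitness ((List.range n).map (x ∘ f)) q t)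
    (hg : A.IsWitness ((List.range n).map (x ∘ g)) q t) : f q = g q := by
  have hv : ∀ h : ℕ → ℕ, (∀ j ≠ q, f j = h j) →
      ∀ j ≠ q, ∀ m ∈ ((List.range n).map (x ∘ h))[j]?, (x ∘ f) j = m := by
    intro h hh j hj m hm
    simp only [List.getElem?_map, Option.mem_def, Option.map_eq_some_iff,
      List.getElem?_eq_some_iff, List.getElem_range] at hm
    obtain ⟨_, ⟨_, rfl⟩, rfl⟩ := hm
    simp only [Function.comp_apply, hh j hj]
  have := (hf _ (hv f fun _ _ => rfl)).trans (hg _ (hv g hfg)).symm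
  have hq : q < n := by
    simpa using (List.getElem?_eq_some_iff.1 (hf _ (hv f fun _ _ => rfl))).1
  simp only [List.getElem?_map, List.getElem?_range hq, Option.map_some, Option.some_inj] at this
  exact hx this

theorem free_range_of_homogeneous {x : ℕ → M} (hx : Function.Injective x)
    (hhom : ∀ F G : Finset ℕ, F.card = G.card →
      A.witnessColor (F.sort.map x) = A.witnessColor (G.sort.map x)) :
    A.Free (Set.range x) := by
  rintro _ ⟨J, rfl⟩ hcl
  have hcl_compl : A.cl (x '' {J}ᶜ) (x J) := A.cl_mono (by
    rintro _ ⟨⟨k, rfl⟩, hk⟩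
    exact ⟨k, fun hkJ => hk (hkJ ▸ rfl), rfl⟩) hcl
  obtain ⟨t, ht, hreal⟩ := A.exists_term_of_cl_image hcl_compl
  set F := insert J t.varFinset
  have hwit := isWitness_sort_map (Finset.mem_insert_self J t.varFinset)
    (fun k hk => Finset.mem_erase.2 ⟨ht hk, Finset.mem_insert_of_mem hk⟩) hreal
  obtain ⟨⟨q, s⟩, hqs⟩ := Option.ne_none_iff_exists'.1 (witnessColor_ne_none hwit)
  have hcolor : ∀ h : ℕ → ℕ, StrictMono h →
      A.IsWitness ((List.range F.card).map (x ∘ h)) q s := fun h hh => by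
    refine isWitness_of_witnessColor_eq_some (w := (q, s)) ?_
    have := hhom ((Finset.range F.card).image h) F
      (by rw [Finset.card_image_of_injective _ hh.injective, Finset.card_range])
    rwa [hh.sort_image, Finset.sort_range, List.map_map, hqs] at this
  -- Two homogeneous sets differing only in their `q`-th element.
  have heq := IsWitness.apply_eq hx (g := fun j => if j = q then 2 * j + 1 else 2 * j)
    (fun j hj => (if_neg hj).symm) (hcolor (2 * ·) fun i j hij => by dsimp only; omega)
    (hcolor _ fun i j hij => by split_ifs <;> omega)
  simp at heq

theorem Free.not_artinian {X : Set M} (hX : X.Infinite) (hfree : A.Free X) : ¬ A.Artinian := by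
  set y : ℕ → M := fun n => hX.natEmbedding X n
  have hy : Function.Injective y := Subtype.coe_injective.comp (hX.natEmbedding X).injective
  have hyX : ∀ n, y n ∈ X := fun n => (hX.natEmbedding X n).2
  refine fun hart => hart ⟨fun n => {m | A.cl (y '' Set.Ici n) m},
    fun n => ⟨⟨y n, cl.base ⟨n, Set.self_mem_Ici, rfl⟩⟩, A.closed_cl _⟩, fun n => ?_⟩
  refine (Set.ssubset_iff_of_subset fun m => A.cl_mono (Set.image_mono
    (Set.Ici_subset_Ici.2 n.le_succ))).2 ⟨y n, cl.base ⟨n, Set.self_mem_Ici, rfl⟩, fun hcl => ?_⟩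
  refine hfree (y n) (hyX n) (A.cl_mono ?_ hcl)
  rintro _ ⟨k, hk, rfl⟩
  exact ⟨hyX k, fun hkn => by simp [hy hkn] at hk⟩

end Alg

/-- Erdős cardinal implies free subsets: If λ is infinite and the
partition relation κ → (ω)_λ^{<ω} holds — every coloring of the finite subsets of a
set of size κ (carried by the order `κ.ord.toType`) with at most λ colors has an
infinite strictly increasing homogeneous-in-each-cardinality sequence — then every
algebra of cardinality κ with signature of size at most λ has an infinite free
subset, and in particular is not Artinian. -/
theorem stmt14 (lam κ : Cardinal.{u}) (hlam : ℵ₀ ≤ lam)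
    (hpart : ∀ (L : Type u), #L ≤ lam → ∀ f : Finset κ.ord.ToType → L,
      ∃ a : ℕ → κ.ord.ToType, StrictMono a ∧
        ∀ s t : Finset κ.ord.ToType, ↑s ⊆ Set.range a → ↑t ⊆ Set.range a →
          s.card = t.card → f s = f t) :
    ∀ (ι M : Type u) (A : Alg ι M), #ι ≤ lam → #M = κ →
      (∃ X : Set M, X.Infinite ∧ A.Free X) ∧ ¬ A.Artinian := by
  intro ι M A hι hM
  obtain ⟨e⟩ : Nonempty (κ.ord.ToType ≃ M) := by
    rw [← Cardinal.eq, Cardinal.mk_toType, Cardinal.card_ord, hM]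
  obtain ⟨a, ha, hhom⟩ := hpart A.Color (A.mk_color_le hlam hι)
    fun s : Finset κ.ord.ToType => A.witnessColor ((s.sort (· ≤ ·)).map e)
  have hx : Function.Injective (e ∘ a) := e.injective.comp ha.injective
  have hfree : A.Free (Set.range (e ∘ a)) := A.free_range_of_homogeneous hx fun F G hFG => by
    have := hhom (F.image a) (G.image a) (by simp) (by simp)
      (by rwa [Finset.card_image_of_injective _ ha.injective,
        Finset.card_image_of_injective _ ha.injective])
    simpa only [ha.sort_image, List.map_map] using this
  have hinf := Set.infinite_range_of_injective hx
  exact ⟨⟨_, hinf, hfree⟩, hfree.not_artinian hinf⟩
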